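/- Let D = ⟨x, y | x^(2^r) = y² = [x,y]² = [x,[x,y]] = [y,[x,y]] = 1⟩ with r ≥ 2 and z := [x,y]. Then E := ⟨x^(2^(r-1)), y, z⟩ is the unique elementary abelian subgroup of D of order 8. -/

import Mathlib

open scoped commutatorElement

/-- The generator `x` of the free group on two letters. -/
def gx : FreeGroup (Fin 2) := FreeGroup.of 0

/-- The generator `y` of the free group on two letters. -/
def gy : FreeGroup (Fin 2) := FreeGroup.of 1

/-- The relations of the Rédei presentation with parameters `r`, `s`:
`x^(2^r)`, `y^(2^s)`, `⁅x,y⁆^2`, `⁅x,⁅x,y⁆⁆`, `⁅y,⁅x,y⁆⁆`,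
where `⁅a,b⁆ = a*b*a⁻¹*b⁻¹`. -/
def redeiRels (r s : ℕ) : Set (FreeGroup (Fin 2)) :=
  {gx ^ (2 ^ r), gy ^ (2 ^ s), ⁅gx, gy⁆ ^ 2, ⁅gx, ⁅gx, gy⁆⁆, ⁅gy, ⁅gx, gy⁆⁆}

/-- The Rédei group `⟨x,y ∣ x^(2^r) = y^(2^s) = [x,y]^2 = [x,[x,y]] = [y,[x,y]] = 1⟩`. -/
abbrev RedeiGroup (r s : ℕ) := PresentedGroup (redeiRels r s)

/-- The image of the generator `x` in the Rédei group. -/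
def Dx (r s : ℕ) : RedeiGroup r s := PresentedGroup.of 0

/-- The image of the generator `y` in the Rédei group. -/
def Dy (r s : ℕ) : RedeiGroup r s := PresentedGroup.of 1

/-- The element `z = [x,y]` of the Rédei group. -/
def Dz (r s : ℕ) : RedeiGroup r s := ⁅Dx r s, Dy r s⁆

/-!
Sending `x, y` to `(1, 0, 0), (0, 1, 0)` maps `D` homomorphically into the explicit group
`ZMod (2 ^ r) × ZMod 2 × ZMod 2` with multiplication twisted by `z`. The map is injective since,
`z` being central with `y ^ b * x ^ a = z ^ (a * b) * x ^ a * y ^ b`, every element of `D` is of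
the form `x ^ a * y ^ b * z ^ c`. In the model, `m * m = 1` exactly when the first coordinate of
`m` is `0` or `2 ^ (r - 1)` (the twist vanishes there because `r ≥ 2`), and these eight elements
form the image of `E`. Hence `E` consists of all `g` with `g * g = 1`, and an 8-element subgroup
all of whose elements square to `1` lies in `E` and so equals it.
-/

theorem pow_mul_pow_eq_commutatorElement_pow_mul_pow_mul_pow {G : Type*} [Group G] {x y : G}
    (hx : Commute ⁅y, x⁆ x) (hy : Commute ⁅y, x⁆ y) (a b : ℕ) :
    y ^ b * x ^ a = ⁅y, x⁆ ^ (a * b) * x ^ a * y ^ b := by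
  have hconj : y * x ^ a * y⁻¹ = ⁅y, x⁆ ^ a * x ^ a := by
    rw [← conj_pow, ← hx.mul_pow, commutatorElement_def]; group
  induction b with
  | zero => simp
  | succ b ih =>
    calc y ^ (b + 1) * x ^ a = y * (y ^ b * x ^ a) := by rw [pow_succ', mul_assoc]
      _ = ⁅y, x⁆ ^ (a * b) * (y * x ^ a * y⁻¹) * y ^ (b + 1) := by
        rw [ih, ← mul_assoc, ← mul_assoc, ← (hy.pow_left _).eq]; group
      _ = ⁅y, x⁆ ^ (a * (b + 1)) * x ^ a * y ^ (b + 1) := by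
        rw [hconj, mul_add, mul_one, pow_add]; group

theorem ZMod.add_self_eq_zero_iff_two_pow {r : ℕ} (hr : r ≠ 0) (i : ZMod (2 ^ r)) :
    i + i = 0 ↔ i = 0 ∨ i = 2 ^ (r - 1) := by
  have h2 : 2 ^ r = 2 * 2 ^ (r - 1) := by rw [← pow_succ', Nat.sub_add_cancel (by omega)]
  constructor
  · intro h
    obtain ⟨c, hc⟩ : 2 ^ r ∣ i.val + i.val := by
      rw [← ZMod.natCast_eq_zero_iff, Nat.cast_add, ZMod.natCast_zmod_val, h]
    have hc2 : c < 2 := Nat.lt_of_mul_lt_mul_left (a := 2 ^ r) (by have := i.val_lt; omega)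
    rw [← ZMod.natCast_zmod_val i]
    interval_cases c
    · left; rw [show i.val = 0 by omega, Nat.cast_zero]
    · right; rw [show i.val = 2 ^ (r - 1) by omega]; push_cast; rfl
  · rintro (rfl | rfl)
    · exact add_zero 0
    · rw [← two_mul, ← pow_succ', Nat.sub_add_cancel (by omega)]
      exact_mod_cast ZMod.natCast_self (2 ^ r)

theorem ZMod.two_pow_pred_ne_zero {r : ℕ} (hr : r ≠ 0) :
    (2 : ZMod (2 ^ r)) ^ (r - 1) ≠ 0 := by
  intro h
  have := (ZMod.natCast_eq_zero_iff (2 ^ (r - 1)) (2 ^ r)).mp (by exact_mod_cast h)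
  rw [Nat.pow_dvd_pow_iff_le_right (by norm_num)] at this
  omega

namespace RedeiGroup

variable (r s : ℕ)

def E : Subgroup (RedeiGroup r s) := Subgroup.closure {Dx r s ^ 2 ^ (r - 1), Dy r s, Dz r s}

theorem Dx_pow_two_pow : Dx r s ^ 2 ^ r = 1 := by
  simpa [Dx, gx, PresentedGroup.of] using
    PresentedGroup.one_of_mem (show gx ^ 2 ^ r ∈ redeiRels r s by simp [redeiRels])

theorem Dy_pow_two_pow : Dy r s ^ 2 ^ s = 1 := by
  simpa [Dy, gy, PresentedGroup.of] using
    PresentedGroup.one_of_mem (show gy ^ 2 ^ s ∈ redeiRels r s by simp [redeiRels])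

theorem Dz_sq : Dz r s ^ 2 = 1 := by
  simpa [Dz, Dx, Dy, gx, gy, PresentedGroup.of, map_commutatorElement] using
    PresentedGroup.one_of_mem (show ⁅gx, gy⁆ ^ 2 ∈ redeiRels r s by simp [redeiRels])

theorem commute_Dx_Dz : Commute (Dx r s) (Dz r s) := by
  refine commutatorElement_eq_one_iff_commute.mp ?_
  simpa [Dz, Dx, Dy, gx, gy, PresentedGroup.of, map_commutatorElement] using
    PresentedGroup.one_of_mem (show ⁅gx, ⁅gx, gy⁆⁆ ∈ redeiRels r s by simp [redeiRels])

theorem commute_Dy_Dz : Commute (Dy r s) (Dz r s) := by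
  refine commutatorElement_eq_one_iff_commute.mp ?_
  simpa [Dz, Dx, Dy, gx, gy, PresentedGroup.of, map_commutatorElement] using
    PresentedGroup.one_of_mem (show ⁅gy, ⁅gx, gy⁆⁆ ∈ redeiRels r s by simp [redeiRels])

theorem commute_Dz (g : RedeiGroup r s) : Commute (Dz r s) g := by
  have hg : g ∈ Subgroup.closure (Set.range PresentedGroup.of) := by
    rw [PresentedGroup.closure_range_of]; trivial
  induction hg using Subgroup.closure_induction with
  | mem _ h =>
    obtain ⟨i, rfl⟩ := h
    fin_cases i
    exacts [(commute_Dx_Dz r s).symm, (commute_Dy_Dz r s).symm]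
  | one => exact Commute.one_right _
  | mul _ _ _ _ h₁ h₂ => exact h₁.mul_right h₂
  | inv _ _ h => exact h.inv_right

theorem Dz_inv : (Dz r s)⁻¹ = Dz r s :=
  inv_eq_of_mul_eq_one_right (by rw [← sq, Dz_sq])

theorem Dy_pow_mul_Dx_pow (a b : ℕ) :
    Dy r s ^ b * Dx r s ^ a = Dz r s ^ (a * b) * Dx r s ^ a * Dy r s ^ b := by
  have hz : ⁅Dy r s, Dx r s⁆ = Dz r s := by rw [← commutatorElement_inv, ← Dz, Dz_inv]
  rw [← hz]
  exact pow_mul_pow_eq_commutatorElement_pow_mul_pow_mul_pow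
    (by rw [hz]; exact (commute_Dx_Dz r s).symm) (by rw [hz]; exact (commute_Dy_Dz r s).symm) a b

theorem exists_eq_Dx_pow_mul_Dy_pow_mul_Dz_pow (g : RedeiGroup r s) :
    ∃ a b c : ℕ, g = Dx r s ^ a * Dy r s ^ b * Dz r s ^ c := by
  have Dx_pow_mul (m : ℕ) {g : RedeiGroup r s} :
      (∃ a b c : ℕ, g = Dx r s ^ a * Dy r s ^ b * Dz r s ^ c) →
        ∃ a b c : ℕ, Dx r s ^ m * g = Dx r s ^ a * Dy r s ^ b * Dz r s ^ c := by
    rintro ⟨a, b, c, rfl⟩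
    exact ⟨m + a, b, c, by simp only [pow_add, mul_assoc]⟩
  have Dy_pow_mul (m : ℕ) {g : RedeiGroup r s} :
      (∃ a b c : ℕ, g = Dx r s ^ a * Dy r s ^ b * Dz r s ^ c) →
        ∃ a b c : ℕ, Dy r s ^ m * g = Dx r s ^ a * Dy r s ^ b * Dz r s ^ c := by
    rintro ⟨a, b, c, rfl⟩
    refine ⟨a, m + b, a * m + c, ?_⟩
    calc Dy r s ^ m * (Dx r s ^ a * Dy r s ^ b * Dz r s ^ c)
        = Dy r s ^ m * Dx r s ^ a * Dy r s ^ b * Dz r s ^ c := by simp only [mul_assoc]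
      _ = Dz r s ^ (a * m) * (Dx r s ^ a * Dy r s ^ (m + b)) * Dz r s ^ c := by
        rw [Dy_pow_mul_Dx_pow, pow_add]; simp only [mul_assoc]
      _ = Dx r s ^ a * Dy r s ^ (m + b) * Dz r s ^ (a * m + c) := by
        rw [((commute_Dz r s _).pow_left _).eq, pow_add (Dz r s)]; simp only [mul_assoc]
  have inv_eq_pow {h : RedeiGroup r s} {n : ℕ} (hn : h ^ 2 ^ n = 1) : h⁻¹ = h ^ (2 ^ n - 1) :=
    inv_eq_of_mul_eq_one_right (by rw [← pow_succ', Nat.sub_add_cancel Nat.one_le_two_pow, hn])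
  have hg : g ∈ Subgroup.closure (Set.range PresentedGroup.of) := by
    rw [PresentedGroup.closure_range_of]; trivial
  induction hg using Subgroup.closure_induction_left with
  | one => exact ⟨0, 0, 0, by simp⟩
  | mul_left _ h _ _ ih =>
    obtain ⟨i, rfl⟩ := h
    fin_cases i
    · exact pow_one (Dx r s) ▸ Dx_pow_mul 1 ih
    · exact pow_one (Dy r s) ▸ Dy_pow_mul 1 ih
  | inv_mul_cancel _ h _ _ ih =>
    obtain ⟨i, rfl⟩ := h
    fin_cases i
    · exact inv_eq_pow (Dx_pow_two_pow r s) ▸ Dx_pow_mul _ ih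
    · exact inv_eq_pow (Dy_pow_two_pow r s) ▸ Dy_pow_mul _ ih

end RedeiGroup

/-- The element `⟨i, j, k⟩` stands for `x ^ i * y ^ j * z ^ k`; moving `y ^ j` past `x ^ i'`
produces the factor `z ^ (i' * j)`. -/
@[ext]
structure RedeiModel (r : ℕ) where
  i : ZMod (2 ^ r)
  j : ZMod 2
  k : ZMod 2

namespace RedeiModel

variable {r : ℕ}

instance : One (RedeiModel r) := ⟨⟨0, 0, 0⟩⟩

@[simp] theorem one_def : (1 : RedeiModel r) = ⟨0, 0, 0⟩ := rfl

variable (r) in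
def Mx : RedeiModel r := ⟨1, 0, 0⟩

variable (r) in
def My : RedeiModel r := ⟨0, 1, 0⟩

variable (r) in
def Mz : RedeiModel r := ⟨0, 0, 1⟩

variable [NeZero r]

variable (r) in
def modTwo : ZMod (2 ^ r) →+* ZMod 2 := ZMod.castHom (dvd_pow_self 2 (NeZero.ne r)) _

instance : Mul (RedeiModel r) :=
  ⟨fun a b => ⟨a.i + b.i, a.j + b.j, a.k + b.k + a.j * modTwo r b.i⟩⟩

instance : Inv (RedeiModel r) := ⟨fun a => ⟨-a.i, -a.j, -a.k + a.j * modTwo r a.i⟩⟩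

@[simp] theorem mul_def (a b : RedeiModel r) :
    a * b = ⟨a.i + b.i, a.j + b.j, a.k + b.k + a.j * modTwo r b.i⟩ := rfl

@[simp] theorem inv_def (a : RedeiModel r) :
    a⁻¹ = ⟨-a.i, -a.j, -a.k + a.j * modTwo r a.i⟩ := rfl

instance : Group (RedeiModel r) :=
  Group.ofLeftAxioms
    (fun a b c => by ext <;> simp only [mul_def, map_add] <;> ring)
    (fun a => by ext <;> simp)
    (fun a => by ext <;> simp only [mul_def, inv_def, one_def] <;> ring)

theorem Mx_pow (a : ℕ) : Mx r ^ a = ⟨a, 0, 0⟩ := by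
  induction a with
  | zero => ext <;> simp
  | succ a ih => rw [pow_succ, ih]; ext <;> simp [Mx]

theorem My_pow (b : ℕ) : My r ^ b = ⟨0, b, 0⟩ := by
  induction b with
  | zero => ext <;> simp
  | succ b ih => rw [pow_succ, ih]; ext <;> simp [My]

theorem Mz_pow (c : ℕ) : Mz r ^ c = ⟨0, 0, c⟩ := by
  induction c with
  | zero => ext <;> simp
  | succ c ih => rw [pow_succ, ih]; ext <;> simp [Mz]

theorem Mx_pow_mul_My_pow_mul_Mz_pow (a b c : ℕ) :
    Mx r ^ a * My r ^ b * Mz r ^ c = ⟨a, b, c⟩ := by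
  ext <;> simp [Mx_pow, My_pow, Mz_pow]

theorem commutatorElement_Mx_My : ⁅Mx r, My r⁆ = Mz r := by
  ext <;> simp [commutatorElement_def, Mx, My, Mz, CharTwo.add_self_eq_zero]

theorem Mz_mem_center : Mz r ∈ Subgroup.center (RedeiModel r) :=
  Subgroup.mem_center_iff.mpr fun m => by ext <;> simp [Mz, add_comm]

variable (r) in
def Omega : Subgroup (RedeiModel r) where
  carrier := {m | m.i + m.i = 0}
  mul_mem' {a b} ha hb := by
    change (a.i + b.i) + (a.i + b.i) = 0
    rw [add_add_add_comm, ha, hb, add_zero]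
  one_mem' := add_zero 0
  inv_mem' {a} ha := by
    change -a.i + -a.i = 0
    rw [← neg_add, ha, neg_zero]

theorem mem_Omega {m : RedeiModel r} : m ∈ Omega r ↔ m.i + m.i = 0 := Iff.rfl

theorem mul_self_eq_one_iff (hr : 2 ≤ r) (m : RedeiModel r) : m * m = 1 ↔ m ∈ Omega r := by
  refine ⟨fun h => congrArg RedeiModel.i h, fun h => ?_⟩
  have hi : modTwo r m.i = 0 := by
    rcases (ZMod.add_self_eq_zero_iff_two_pow (NeZero.ne r) m.i).mp h with hi | hi
    · rw [hi, map_zero]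
    · rw [hi, map_pow, map_ofNat, CharTwo.two_eq_zero (R := ZMod 2), zero_pow (by omega)]
  ext
  · exact h
  · exact CharTwo.add_self_eq_zero m.j
  · change m.k + m.k + m.j * modTwo r m.i = 0
    rw [hi, mul_zero, add_zero, CharTwo.add_self_eq_zero]

theorem card_Omega : Nat.card (Omega r) = 8 := by
  let e : Omega r ≃ {i : ZMod (2 ^ r) // i + i = 0} × ZMod 2 × ZMod 2 :=
    { toFun m := (⟨m.1.i, m.2⟩, m.1.j, m.1.k)
      invFun t := ⟨⟨t.1, t.2.1, t.2.2⟩, t.1.2⟩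
      left_inv _ := rfl
      right_inv _ := rfl }
  have h2 : {i : ZMod (2 ^ r) | i + i = 0} = {0, 2 ^ (r - 1)} := by
    ext i; exact ZMod.add_self_eq_zero_iff_two_pow (NeZero.ne r) i
  rw [Nat.card_congr e, Nat.card_prod, Nat.card_prod, Nat.card_zmod]
  change Nat.card {i : ZMod (2 ^ r) | i + i = 0} * _ = 8
  rw [h2, Nat.card_coe_set_eq, Set.ncard_pair (ZMod.two_pow_pred_ne_zero (NeZero.ne r)).symm]

theorem closure_eq_Omega : Subgroup.closure {Mx r ^ 2 ^ (r - 1), My r, Mz r} = Omega r := by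
  apply le_antisymm
  · rw [Subgroup.closure_le]
    rintro m (rfl | rfl | rfl) <;> rw [SetLike.mem_coe, mem_Omega]
    · rw [Mx_pow]
      exact (ZMod.add_self_eq_zero_iff_two_pow (NeZero.ne r) _).mpr (Or.inr (by push_cast; rfl))
    · exact add_zero 0
    · exact add_zero 0
  · intro m hm
    obtain ⟨e, he⟩ : ∃ e : ℕ, ((2 ^ (r - 1) * e : ℕ) : ZMod (2 ^ r)) = m.i := by
      rcases (ZMod.add_self_eq_zero_iff_two_pow (NeZero.ne r) m.i).mp hm with h | h
      · exact ⟨0, by rw [h, mul_zero, Nat.cast_zero]⟩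
      · exact ⟨1, by rw [h, mul_one]; push_cast; rfl⟩
    have hm : m = (Mx r ^ 2 ^ (r - 1)) ^ e * My r ^ m.j.val * Mz r ^ m.k.val := by
      rw [← pow_mul, Mx_pow_mul_My_pow_mul_Mz_pow, he, ZMod.natCast_zmod_val,
        ZMod.natCast_zmod_val]
    rw [hm]
    refine mul_mem (mul_mem (pow_mem ?_ _) (pow_mem ?_ _)) (pow_mem ?_ _) <;>
      exact Subgroup.subset_closure (by simp)

end RedeiModel

namespace RedeiGroup

open RedeiModel

variable (r : ℕ)

theorem lift_eq_one_of_mem_redeiRels [NeZero r] :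
    ∀ w ∈ redeiRels r 1, FreeGroup.lift ![Mx r, My r] w = 1 := by
  have hx : FreeGroup.lift ![Mx r, My r] gx = Mx r := FreeGroup.lift_apply_of
  have hy : FreeGroup.lift ![Mx r, My r] gy = My r := FreeGroup.lift_apply_of
  rintro w (rfl | rfl | rfl | rfl | rfl)
  · rw [map_pow, hx, Mx_pow, ZMod.natCast_self]; rfl
  · rw [map_pow, hy, My_pow]; rfl
  · rw [map_pow, map_commutatorElement, hx, hy, commutatorElement_Mx_My, Mz_pow]; rfl
  · rw [map_commutatorElement, map_commutatorElement, hx, hy, commutatorElement_Mx_My,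
      commutatorElement_eq_one_iff_commute]
    exact Subgroup.mem_center_iff.mp Mz_mem_center _
  · rw [map_commutatorElement, map_commutatorElement, hx, hy, commutatorElement_Mx_My,
      commutatorElement_eq_one_iff_commute]
    exact Subgroup.mem_center_iff.mp Mz_mem_center _

def toModel [NeZero r] : RedeiGroup r 1 →* RedeiModel r :=
  PresentedGroup.toGroup (lift_eq_one_of_mem_redeiRels r)

section

variable [NeZero r]

theorem toModel_Dx : toModel r (Dx r 1) = Mx r := PresentedGroup.toGroup.of _

theorem toModel_Dy : toModel r (Dy r 1) = My r := PresentedGroup.toGroup.of _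

theorem toModel_Dz : toModel r (Dz r 1) = Mz r := by
  rw [Dz, map_commutatorElement, toModel_Dx, toModel_Dy, commutatorElement_Mx_My]

theorem toModel_injective : Function.Injective (toModel r) := by
  refine (injective_iff_map_eq_one _).mpr fun g hg => ?_
  obtain ⟨a, b, c, rfl⟩ := exists_eq_Dx_pow_mul_Dy_pow_mul_Dz_pow r 1 g
  rw [map_mul, map_mul, map_pow, map_pow, map_pow, toModel_Dx, toModel_Dy, toModel_Dz,
    Mx_pow_mul_My_pow_mul_Mz_pow] at hg
  obtain ⟨a, rfl⟩ := (ZMod.natCast_eq_zero_iff _ _).mp (congrArg RedeiModel.i hg)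
  obtain ⟨b, rfl⟩ := (ZMod.natCast_eq_zero_iff _ _).mp (congrArg RedeiModel.j hg)
  obtain ⟨c, rfl⟩ := (ZMod.natCast_eq_zero_iff _ _).mp (congrArg RedeiModel.k hg)
  have hy : Dy r 1 ^ 2 = 1 := Dy_pow_two_pow r 1
  simp only [pow_mul, Dx_pow_two_pow, hy, Dz_sq, one_pow, mul_one]

theorem map_toModel_E : (E r 1).map (toModel r) = Omega r := by
  rw [E, MonoidHom.map_closure, Set.image_insert_eq, Set.image_insert_eq, Set.image_singleton,
    map_pow, toModel_Dx, toModel_Dy, toModel_Dz, closure_eq_Omega]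

end

theorem card_E (hr : r ≠ 0) : Nat.card (E r 1) = 8 := by
  have : NeZero r := ⟨hr⟩
  rw [← Subgroup.card_map_of_injective (toModel_injective r), map_toModel_E, card_Omega]

theorem mem_E_iff (hr : 2 ≤ r) (g : RedeiGroup r 1) : g ∈ E r 1 ↔ g * g = 1 := by
  have : NeZero r := ⟨by omega⟩
  rw [← Subgroup.mem_map_iff_mem (toModel_injective r), map_toModel_E,
    ← RedeiModel.mul_self_eq_one_iff hr, ← map_mul, ← map_one (toModel r),
    (toModel_injective r).eq_iff]

end RedeiGroup

open RedeiGroup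

theorem stmt13 (r : ℕ) (hr : 2 ≤ r) :
    (Nat.card (Subgroup.closure {(Dx r 1) ^ 2 ^ (r - 1), Dy r 1, Dz r 1} :
        Subgroup (RedeiGroup r 1)) = 8 ∧
      ∀ g ∈ (Subgroup.closure {(Dx r 1) ^ 2 ^ (r - 1), Dy r 1, Dz r 1} :
        Subgroup (RedeiGroup r 1)), g * g = 1) ∧
    ∀ H : Subgroup (RedeiGroup r 1), Nat.card H = 8 → (∀ g ∈ H, g * g = 1) →
      H = Subgroup.closure {(Dx r 1) ^ 2 ^ (r - 1), Dy r 1, Dz r 1} := by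
  have hcard : Nat.card (E r 1) = 8 := card_E r (by omega)
  have : Finite (E r 1) := Nat.finite_of_card_ne_zero (by rw [hcard]; omega)
  refine ⟨⟨hcard, fun g hg => (mem_E_iff r hr g).mp hg⟩, fun H hH hsq => ?_⟩
  have hle : H ≤ E r 1 := fun g hg => (mem_E_iff r hr g).mpr (hsq g hg)
  exact Subgroup.eq_of_le_of_card_ge (K := E r 1) hle (by rw [hH, hcard])
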